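/- arXiv:1602.06366 — 4 statements merged into one kernel-verified Lean document; each statement's English description precedes it below -/
import Mathlib

section
/- Let N be a positive integer, let k : Fin N → Fin K be an assignment of units to subclasses, let Z : Fin N → {0,1} be treatment indicators, and for each subclass j let n_j = #{i : k(i) = j} and n1_j = #{i : k(i) = j ∧ Z(i) = 1}. Define p̂(i) = n1_{k(i)} / n_{k(i)}. If n1_j > 0 for every subclass j with n_j > 0, then ∑_{i=1}^N Z(i) / p̂(i) = N. -/
open Finset

/-- With subclassification weights `p̂ i = n1 (k i) / n (k i)`,
the sum of inverse-propensity weights over treated units equals `N`. -/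
theorem sum_inv_subclass_weights_eq
    (N K : ℕ) (hN : 0 < N) (k : Fin N → Fin K)
    (Z : Fin N → ℕ) (hZ : ∀ i, Z i = 0 ∨ Z i = 1)
    (n n1 : Fin K → ℕ)
    (hn : ∀ j, n j = (Finset.univ.filter (fun i => k i = j)).card)
    (hn1 : ∀ j, n1 j = (Finset.univ.filter (fun i => k i = j ∧ Z i = 1)).card)
    (hpos : ∀ j, 0 < n j → 0 < n1 j) :
    ∑ i, (Z i : ℝ) / ((n1 (k i) : ℝ) / (n (k i) : ℝ)) = N := by
  have key : ∀ j : Fin K, ∑ i ∈ univ.filter (fun i => k i = j), (Z i : ℝ) = n1 j := by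
    intro j
    rw [hn1 j]
    have : (univ.filter (fun i => k i = j ∧ Z i = 1))
        = (univ.filter (fun i => k i = j)).filter (fun i => Z i = 1) := by
      rw [filter_filter]
    rw [this]
    rw [← Finset.sum_boole]
    push_cast
    refine Finset.sum_congr rfl fun i _ => ?_
    rcases hZ i with h | h <;> simp [h]
  rw [← Finset.sum_fiberwise univ k (fun i => (Z i : ℝ) / ((n1 (k i) : ℝ) / (n (k i) : ℝ)))]
  have step : ∀ j : Fin K,
      ∑ i ∈ univ.filter (fun i => k i = j), (Z i : ℝ) / ((n1 (k i) : ℝ) / (n (k i) : ℝ))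
        = (n j : ℝ) := by
    intro j
    have hcongr : ∑ i ∈ univ.filter (fun i => k i = j),
        (Z i : ℝ) / ((n1 (k i) : ℝ) / (n (k i) : ℝ))
        = ∑ i ∈ univ.filter (fun i => k i = j), (Z i : ℝ) / ((n1 j : ℝ) / (n j : ℝ)) := by
      refine Finset.sum_congr rfl fun i hi => ?_
      simp only [mem_filter] at hi
      rw [hi.2]
    rw [hcongr, ← Finset.sum_div, key j]
    rcases Nat.eq_zero_or_pos (n j) with h0 | h0
    · have : n1 j = 0 := by
        have hempty : (univ.filter (fun i => k i = j)) = ∅ := by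
          apply Finset.card_eq_zero.mp
          rw [← hn j]; exact h0
        rw [hn1 j, ← filter_filter, hempty, Finset.filter_empty, Finset.card_empty]
      simp [this, h0]
    · have h1 := hpos j h0
      have hn1ne : (n1 j : ℝ) ≠ 0 := Nat.cast_ne_zero.mpr h1.ne'
      have hnne : (n j : ℝ) ≠ 0 := Nat.cast_ne_zero.mpr h0.ne'
      field_simp
  rw [Finset.sum_congr rfl fun j _ => step j]
  have : ∑ j : Fin K, (n j : ℝ) = ∑ j : Fin K, ((univ.filter (fun i => k i = j)).card : ℝ) := by
    exact Finset.sum_congr rfl fun j _ => by rw [hn j]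
  rw [this]
  push_cast
  rw [← Nat.cast_sum]
  rw [← Finset.card_eq_sum_card_fiberwise (fun i _ => mem_univ (k i))]
  simp
end

section
/- Under the setting of the previous identity, define also p̂(i) = n1_{k(i)}/n_{k(i)} and suppose every subclass j with n_j > 0 satisfies 0 < n1_j < n_j. Then for any outcome vector Y : Fin N → ℝ, the Horvitz–Thompson estimator (1/N)∑_i Z(i)Y(i)/p̂(i) − (1/N)∑_i (1−Z(i))Y(i)/(1−p̂(i)) equals the Hájek estimator (∑_i Z(i)Y(i)/p̂(i))/(∑_i Z(i)/p̂(i)) − (∑_i (1−Z(i))Y(i)/(1−p̂(i)))/(∑_i (1−Z(i))/(1−p̂(i))). -/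
open Finset

lemma sum_fiber_indicator {N : ℕ} (Z : Fin N → ℕ) (hZ : ∀ i, Z i = 0 ∨ Z i = 1)
    (s : Finset (Fin N)) :
    ∑ i ∈ s, (Z i : ℝ) = ((s.filter fun i => Z i = 1).card : ℝ) := by
  rw [Finset.card_filter]
  push_cast
  refine Finset.sum_congr rfl fun i _ => ?_
  rcases hZ i with h | h <;> simp [h]

/-- Proposition 1: with subclassification propensity estimates
`p̂ i = n1 (k i) / n (k i)`, the Horvitz–Thompson estimator coincides with the
Hájek estimator for any outcome vector `Y`. -/
theorem horvitzThompson_eq_hajek_subclass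
    (N K : ℕ) (hN : 0 < N) (k : Fin N → Fin K)
    (Z : Fin N → ℕ) (hZ : ∀ i, Z i = 0 ∨ Z i = 1)
    (n n1 : Fin K → ℕ)
    (hn : ∀ j, n j = (Finset.univ.filter (fun i => k i = j)).card)
    (hn1 : ∀ j, n1 j = (Finset.univ.filter (fun i => k i = j ∧ Z i = 1)).card)
    (hpos : ∀ j, 0 < n j → 0 < n1 j ∧ n1 j < n j)
    (Y : Fin N → ℝ)
    (phat : Fin N → ℝ) (hphat : ∀ i, phat i = (n1 (k i) : ℝ) / (n (k i) : ℝ)) :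
    (1 / (N : ℝ)) * ∑ i, (Z i : ℝ) * Y i / phat i
      - (1 / (N : ℝ)) * ∑ i, (1 - (Z i : ℝ)) * Y i / (1 - phat i)
    = (∑ i, (Z i : ℝ) * Y i / phat i) / (∑ i, (Z i : ℝ) / phat i)
      - (∑ i, (1 - (Z i : ℝ)) * Y i / (1 - phat i)) / (∑ i, (1 - (Z i : ℝ)) / (1 - phat i)) := by
  -- every unit's subclass is nonempty
  have hnpos : ∀ i, 0 < n (k i) := by
    intro i
    rw [hn]
    exact Finset.card_pos.mpr ⟨i, by simp⟩
  have hsumn : ∑ j, (n j : ℝ) = (N : ℝ) := by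
    have := Finset.card_eq_sum_card_fiberwise
      (f := k) (s := (Finset.univ : Finset (Fin N))) (t := Finset.univ) (fun x _ => mem_univ _)
    push_cast
    rw [← Nat.cast_sum]
    norm_cast
    simp only [hn]
    simpa using this.symm
  -- sum of Z over a fiber is n1
  have hfibZ : ∀ j, ∑ i ∈ Finset.univ.filter (fun i => k i = j), (Z i : ℝ) = (n1 j : ℝ) := by
    intro j
    rw [sum_fiber_indicator Z hZ, hn1, Finset.filter_filter]
  have hfibC : ∀ j, ∑ i ∈ Finset.univ.filter (fun i => k i = j), (1 - (Z i : ℝ))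
      = (n j : ℝ) - (n1 j : ℝ) := by
    intro j
    rw [Finset.sum_sub_distrib, hfibZ, Finset.sum_const, nsmul_eq_mul, mul_one, hn]
  -- key sums
  have hsZ : ∑ i, (Z i : ℝ) / phat i = (N : ℝ) := by
    have h1 : ∀ i, (Z i : ℝ) / phat i = (Z i : ℝ) * ((n (k i) : ℝ) / (n1 (k i) : ℝ)) := by
      intro i
      rw [hphat, div_div_eq_mul_div, mul_div_assoc]
    simp_rw [h1]
    rw [← Finset.sum_fiberwise (g := k) (f := fun i => (Z i : ℝ) * ((n (k i) : ℝ) / (n1 (k i) : ℝ)))]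
    have h2 : ∀ j, ∑ i ∈ Finset.univ.filter (fun i => k i = j),
        (Z i : ℝ) * ((n (k i) : ℝ) / (n1 (k i) : ℝ)) = (n j : ℝ) := by
      intro j
      have hc : ∑ i ∈ Finset.univ.filter (fun i => k i = j),
          (Z i : ℝ) * ((n (k i) : ℝ) / (n1 (k i) : ℝ))
          = ∑ i ∈ Finset.univ.filter (fun i => k i = j),
          (Z i : ℝ) * ((n j : ℝ) / (n1 j : ℝ)) :=
        Finset.sum_congr rfl fun i hi => by rw [(Finset.mem_filter.mp hi).2]
      rw [hc, ← Finset.sum_mul, hfibZ]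
      rcases Nat.eq_zero_or_pos (n j) with h0 | h0
      · have : n1 j = 0 := by
          rw [hn1]
          rw [hn] at h0
          have := Finset.card_eq_zero.mp h0
          rw [Finset.card_eq_zero]
          rw [Finset.filter_and]
          rw [this]
          simp
        simp [this, h0]
      · have h3 : (n1 j : ℝ) ≠ 0 := by
          exact_mod_cast (hpos j h0).1.ne'
        field_simp
    rw [Finset.sum_congr rfl (fun j _ => h2 j), hsumn]
  have hsC : ∑ i, (1 - (Z i : ℝ)) / (1 - phat i) = (N : ℝ) := by
    have h1 : ∀ i, (1 - (Z i : ℝ)) / (1 - phat i)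
        = (1 - (Z i : ℝ)) * ((n (k i) : ℝ) / ((n (k i) : ℝ) - (n1 (k i) : ℝ))) := by
      intro i
      have hne : (n (k i) : ℝ) ≠ 0 := by exact_mod_cast (hnpos i).ne'
      rw [hphat]
      rw [show (1 : ℝ) - (n1 (k i) : ℝ) / (n (k i) : ℝ)
          = ((n (k i) : ℝ) - (n1 (k i) : ℝ)) / (n (k i) : ℝ) by field_simp]
      rw [div_div_eq_mul_div, mul_div_assoc]
    simp_rw [h1]
    rw [← Finset.sum_fiberwise (g := k)
      (f := fun i => (1 - (Z i : ℝ)) * ((n (k i) : ℝ) / ((n (k i) : ℝ) - (n1 (k i) : ℝ))))]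
    have h2 : ∀ j, ∑ i ∈ Finset.univ.filter (fun i => k i = j),
        (1 - (Z i : ℝ)) * ((n (k i) : ℝ) / ((n (k i) : ℝ) - (n1 (k i) : ℝ))) = (n j : ℝ) := by
      intro j
      have hc : ∑ i ∈ Finset.univ.filter (fun i => k i = j),
          (1 - (Z i : ℝ)) * ((n (k i) : ℝ) / ((n (k i) : ℝ) - (n1 (k i) : ℝ)))
          = ∑ i ∈ Finset.univ.filter (fun i => k i = j),
          (1 - (Z i : ℝ)) * ((n j : ℝ) / ((n j : ℝ) - (n1 j : ℝ))) :=
        Finset.sum_congr rfl fun i hi => by rw [(Finset.mem_filter.mp hi).2]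
      rw [hc, ← Finset.sum_mul, hfibC]
      rcases Nat.eq_zero_or_pos (n j) with h0 | h0
      · have hfe : Finset.univ.filter (fun i => k i = j) = ∅ := by
          rw [hn] at h0; exact Finset.card_eq_zero.mp h0
        simp [h0]
      · have h3 : (n j : ℝ) - (n1 j : ℝ) ≠ 0 := by
          have := (hpos j h0).2
          have : (n1 j : ℝ) < (n j : ℝ) := by exact_mod_cast this
          linarith
        field_simp
    rw [Finset.sum_congr rfl (fun j _ => h2 j), hsumn]
  rw [hsZ, hsC]
  ring
end

section
/- Let Z be a {0,1}-valued random variable, X a random element, and e(X) = P(Z=1|X) with 0 < e(X) < 1 almost surely. If Z is conditionally independent of a random variable W given X, then Z is conditionally independent of W given e(X); equivalently, P(Z=1 | W, e(X)) = e(X) almost surely. -/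
/-!
Conditional independence of `{Z = 1}` and `W` given `mX` means
`P(Z = 1, T | mX) = e · P(T | mX)` for `T ∈ σ(W)`; integrating over `U ∈ mX` with the pull-out
property gives `∫_{U ∩ T} Z = ∫_{U ∩ T} e`. These sets form a π-system generating `mX ⊔ σ(W)`, so
`E[Z | mX ⊔ σ(W)] = e`. As `e` is `mX`-measurable, `σ(W, e) ≤ mX ⊔ σ(W)`, and the tower property
yields `E[Z | W, e] = E[e | W, e] = e`.
-/

open MeasureTheory ProbabilityTheory MeasurableSpace

section

variable {Ω : Type*}

theorem IsPiSystem.image2_inter {C D : Set (Set Ω)} (hC : IsPiSystem C) (hD : IsPiSystem D) :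
    IsPiSystem (Set.image2 (· ∩ ·) C D) := by
  rintro _ ⟨s₁, hs₁, t₁, ht₁, rfl⟩ _ ⟨s₂, hs₂, t₂, ht₂, rfl⟩ hne
  rw [Set.inter_inter_inter_comm] at hne ⊢
  exact ⟨s₁ ∩ s₂, hC _ hs₁ _ hs₂ hne.left, t₁ ∩ t₂, hD _ ht₁ _ ht₂ hne.right, rfl⟩

theorem MeasurableSpace.generateFrom_image2_inter_measurableSet (m m₂ : MeasurableSpace Ω) :
    generateFrom (Set.image2 (· ∩ ·) {s | MeasurableSet[m] s} {t | MeasurableSet[m₂] t}) =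
      m ⊔ m₂ := by
  refine le_antisymm (generateFrom_le ?_) (sup_le (fun s hs => ?_) (fun t ht => ?_))
  · rintro _ ⟨s, hs, t, ht, rfl⟩
    exact (le_sup_left (b := m₂) _ hs).inter (le_sup_right (a := m) _ ht)
  · exact measurableSet_generateFrom ⟨s, hs, Set.univ, .univ, Set.inter_univ s⟩
  · exact measurableSet_generateFrom ⟨Set.univ, .univ, t, ht, Set.univ_inter t⟩

variable {m m₂ mΩ : MeasurableSpace Ω} {μ : Measure Ω}

theorem setIntegral_eq_of_isPiSystem {E : Type*} [NormedAddCommGroup E] [NormedSpace ℝ E]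
    {p : Set (Set Ω)} (hm : m ≤ mΩ) (hgen : m = generateFrom p) (hp : IsPiSystem p)
    {f g : Ω → E} (hf : Integrable f μ) (hg : Integrable g μ)
    (huniv : ∫ ω, f ω ∂μ = ∫ ω, g ω ∂μ)
    (hbasic : ∀ s ∈ p, ∫ ω in s, f ω ∂μ = ∫ ω in s, g ω ∂μ)
    {s : Set Ω} (hs : MeasurableSet[m] s) : ∫ ω in s, f ω ∂μ = ∫ ω in s, g ω ∂μ := by
  induction s, hs using induction_on_inter hgen hp with
  | empty => simp
  | basic t ht => exact hbasic t ht
  | compl t ht iht =>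
    rw [setIntegral_compl (hm _ ht) hf, setIntegral_compl (hm _ ht) hg, huniv, iht]
  | iUnion t hdisj ht iht =>
    rw [integral_iUnion (fun i => hm _ (ht i)) hdisj hf.integrableOn,
      integral_iUnion (fun i => hm _ (ht i)) hdisj hg.integrableOn]
    exact tsum_congr iht

theorem condExp_ae_eq_of_le_of_condExp_ae_eq {m₁ : MeasurableSpace Ω} (hm₁₂ : m₁ ≤ m₂)
    (hm₂ : m₂ ≤ mΩ) [SigmaFinite (μ.trim hm₂)] [SigmaFinite (μ.trim (hm₁₂.trans hm₂))]
    {f g : Ω → ℝ} (hfg : μ[f | m₂] =ᵐ[μ] g) (hg : StronglyMeasurable[m₁] g) :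
    μ[f | m₁] =ᵐ[μ] g :=
  calc μ[f | m₁] =ᵐ[μ] μ[μ[f | m₂] | m₁] := (condExp_condExp_of_le hm₁₂ hm₂).symm
    _ =ᵐ[μ] μ[g | m₁] := condExp_congr_ae hfg
    _ = g := condExp_of_stronglyMeasurable _ hg (integrable_condExp.congr hfg)

variable [IsFiniteMeasure μ]

theorem setIntegral_inter_indicator_eq_of_condExp_inter_ae_eq_mul (hm : m ≤ mΩ)
    {S T U : Set Ω} (hS : MeasurableSet S) (hT : MeasurableSet T) (hU : MeasurableSet[m] U)
    (hST : μ⟦S ∩ T | m⟧ =ᵐ[μ] μ⟦S | m⟧ * μ⟦T | m⟧) :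
    ∫ ω in U ∩ T, S.indicator (fun _ => (1 : ℝ)) ω ∂μ = ∫ ω in U ∩ T, (μ⟦S | m⟧) ω ∂μ := by
  have hprod : μ⟦S | m⟧ * T.indicator (fun _ => (1 : ℝ)) = T.indicator (μ⟦S | m⟧) := by
    ext ω; by_cases hω : ω ∈ T <;> simp [hω]
  have hint : Integrable (μ⟦S | m⟧ * T.indicator (fun _ => (1 : ℝ))) μ :=
    hprod ▸ integrable_condExp.indicator hT
  have hpull : μ[μ⟦S | m⟧ * T.indicator (fun _ => (1 : ℝ)) | m] =ᵐ[μ] μ⟦S | m⟧ * μ⟦T | m⟧ :=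
    condExp_mul_of_stronglyMeasurable_left stronglyMeasurable_condExp hint
      ((integrable_const 1).indicator hT)
  calc ∫ ω in U ∩ T, S.indicator (fun _ => (1 : ℝ)) ω ∂μ
      = ∫ ω in U, (S ∩ T).indicator (fun _ => (1 : ℝ)) ω ∂μ := by
        rw [Set.inter_comm S, ← Set.indicator_indicator, setIntegral_indicator hT]
    _ = ∫ ω in U, (μ⟦S ∩ T | m⟧) ω ∂μ :=
        (setIntegral_condExp hm ((integrable_const 1).indicator (hS.inter hT)) hU).symm
    _ = ∫ ω in U, (μ[μ⟦S | m⟧ * T.indicator (fun _ => (1 : ℝ)) | m]) ω ∂μ :=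
        setIntegral_congr_ae (hm _ hU) (by filter_upwards [hST, hpull] with ω h₁ h₂ _; rw [h₁, h₂])
    _ = ∫ ω in U, (μ⟦S | m⟧ * T.indicator (fun _ => (1 : ℝ))) ω ∂μ :=
        setIntegral_condExp hm hint hU
    _ = ∫ ω in U ∩ T, (μ⟦S | m⟧) ω ∂μ := by
        rw [hprod, setIntegral_indicator hT]

theorem condExp_indicator_sup_ae_eq_of_condExp_inter_ae_eq_mul (hm : m ≤ mΩ) (hm₂ : m₂ ≤ mΩ)
    {S : Set Ω} (hS : MeasurableSet S)
    (hindep : ∀ T, MeasurableSet[m₂] T → μ⟦S ∩ T | m⟧ =ᵐ[μ] μ⟦S | m⟧ * μ⟦T | m⟧) :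
    μ⟦S | m ⊔ m₂⟧ =ᵐ[μ] μ⟦S | m⟧ := by
  have hle : m ⊔ m₂ ≤ mΩ := sup_le hm hm₂
  have hSint : Integrable (S.indicator fun _ => (1 : ℝ)) μ := (integrable_const 1).indicator hS
  refine (ae_eq_condExp_of_forall_setIntegral_eq hle hSint
    (fun _ _ _ => integrable_condExp.integrableOn) (fun s hs _ => ?_)
    (stronglyMeasurable_condExp.mono (le_sup_left : m ≤ m ⊔ m₂)).aestronglyMeasurable).symm
  refine (setIntegral_eq_of_isPiSystem hle (generateFrom_image2_inter_measurableSet m m₂).symm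
    (m.isPiSystem_measurableSet.image2_inter m₂.isPiSystem_measurableSet) hSint integrable_condExp
    (integral_condExp hm).symm ?_ hs).symm
  rintro _ ⟨U, hU, T, hT, rfl⟩
  exact setIntegral_inter_indicator_eq_of_condExp_inter_ae_eq_mul hm hS (hm₂ _ hT) hU
    (hindep T hT)

end

theorem propensity_balancing_general
    {Ω : Type*} [mΩ : MeasurableSpace Ω] [StandardBorelSpace Ω]
    (μ : Measure Ω) [IsProbabilityMeasure μ]
    {𝒲 : Type*} [MeasurableSpace 𝒲] (W : Ω → 𝒲) (hW : Measurable W)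
    (Z : Ω → ℝ) (hZ : Measurable Z) (hZ01 : ∀ ω, Z ω = 0 ∨ Z ω = 1)
    (mX : MeasurableSpace Ω)
    (hmXle : mX ≤ mΩ)
    (hindep : @CondIndepFun Ω mX mΩ _ hmXle ℝ 𝒲 _ _ Z W μ _)
    (e : Ω → ℝ) (he : e = μ[Z | mX]) :
    μ[Z | MeasurableSpace.comap (fun ω => (W ω, e ω)) inferInstance] =ᵐ[μ] e := by
  set S := Z ⁻¹' {1}
  have hS : MeasurableSet[mΩ] S := hZ (measurableSet_singleton 1)
  have hZS : Z = S.indicator (fun _ => 1) := by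
    ext ω; rcases hZ01 ω with h | h <;> simp [S, h]
  have hZW : μ[Z | mX ⊔ MeasurableSpace.comap W inferInstance] =ᵐ[μ] e := by
    rw [he, hZS]
    refine condExp_indicator_sup_ae_eq_of_condExp_inter_ae_eq_mul hmXle hW.comap_le hS
      fun T hT => ?_
    exact (condIndepFun_iff _ _ _ _ hZ hW μ).1 hindep S T ⟨{1}, measurableSet_singleton 1, rfl⟩ hT
  have he_meas : Measurable[mX] e := he ▸ stronglyMeasurable_condExp.measurable
  have hle : MeasurableSpace.comap (fun ω => (W ω, e ω)) inferInstance ≤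
      mX ⊔ MeasurableSpace.comap W inferInstance :=
    (((comap_measurable W).mono le_sup_right le_rfl).prodMk
      (he_meas.mono le_sup_left le_rfl)).comap_le
  exact condExp_ae_eq_of_le_of_condExp_ae_eq hle (sup_le hmXle hW.comap_le) hZW
    (measurable_snd.comp (comap_measurable _)).stronglyMeasurable

/-- balancing property of the propensity score: if `Z ⟂ W | X`
and `e(X) = P(Z=1|X) = E[Z|X]` with `0 < e(X) < 1` a.s., then
`P(Z=1 | W, e(X)) = e(X)` a.s., i.e. the conditional expectation of `Z` given
the σ-algebra generated by `(W, e(X))` is a.e. equal to `e(X)`. -/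
theorem propensity_balancing
    {Ω : Type*} [mΩ : MeasurableSpace Ω] [StandardBorelSpace Ω]
    (μ : Measure Ω) [IsProbabilityMeasure μ]
    {𝒳 : Type*} [MeasurableSpace 𝒳] (X : Ω → 𝒳) (hX : Measurable X)
    {𝒲 : Type*} [MeasurableSpace 𝒲] (W : Ω → 𝒲) (hW : Measurable W)
    (Z : Ω → ℝ) (hZ : Measurable Z) (hZ01 : ∀ ω, Z ω = 0 ∨ Z ω = 1)
    (mX : MeasurableSpace Ω) (hmX : mX = MeasurableSpace.comap X inferInstance)
    (hmXle : mX ≤ mΩ)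
    (hindep : @CondIndepFun Ω mX mΩ _ hmXle ℝ 𝒲 _ _ Z W μ _)
    (e : Ω → ℝ) (he : e = μ[Z | mX])
    (hpos : ∀ᵐ ω ∂μ, 0 < e ω ∧ e ω < 1) :
    μ[Z | MeasurableSpace.comap (fun ω => (W ω, e ω)) inferInstance] =ᵐ[μ] e :=
  propensity_balancing_general (mΩ := mΩ) μ W hW Z hZ hZ01 mX hmXle hindep e he
end

section
/- Let Z be a {0,1}-valued random variable, Y(0), Y(1) real integrable random variables with Y = Z·Y(1)+(1−Z)·Y(0), and X a random element such that Z ⟂ (Y(0),Y(1)) | X and 0 < e(X) < 1 a.s., where e(X) = P(Z=1|X). Then E[Y(1)] − E[Y(0)] = E[ E[Y | e(X), Z=1] − E[Y | e(X), Z=0] ], where the outer expectation is over the distribution of e(X). -/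
/-!
Conditional independence of `Z` and `(Y0, Y1)` given `X` factorises `E[Z Y1 | X] = e · E[Y1 | X]`:
fibrewise, under the conditional-expectation kernel, it is the product rule for independent
variables. Since `e` is a function of the propensity score, the tower property carries this
factorisation down to `σ(e(X))`, giving `E[Z Y | e(X)] = e · E[Y1 | e(X)]` and, in the same way,
`E[(1 - Z) Y | e(X)] = (1 - e) · E[Y0 | e(X)]`. Positivity allows dividing by `e` and `1 - e`, and
integrating `E[Y1 | e(X)] - E[Y0 | e(X)]` returns `E[Y1] - E[Y0]`.
-/

open MeasureTheory ProbabilityTheory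

namespace MeasureTheory

theorem condExp_ae_eq_of_le_of_aestronglyMeasurable {Ω : Type*} {m₂ m mΩ : MeasurableSpace Ω}
    {μ : Measure Ω} [IsFiniteMeasure μ] {f : Ω → ℝ} (h₂ : m₂ ≤ m) (hm : m ≤ mΩ)
    (hf : AEStronglyMeasurable[m₂] (μ[f | m]) μ) :
    μ[f | m₂] =ᵐ[μ] μ[f | m] :=
  (condExp_condExp_of_le h₂ hm).symm.trans
    (condExp_of_aestronglyMeasurable' (h₂.trans hm) hf integrable_condExp)

end MeasureTheory

namespace ProbabilityTheory

variable {Ω : Type*} {m₂ m mΩ : MeasurableSpace Ω} [StandardBorelSpace Ω] {hm : m ≤ mΩ}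
  {μ : Measure Ω} [IsFiniteMeasure μ] {f g : Ω → ℝ}

theorem CondIndepFun.ae_indepFun_condExpKernel {β γ : Type*} [MeasurableSpace β]
    [MeasurableSpace γ] [MeasurableSpace.CountableOrCountablyGenerated Ω (β × γ)]
    {X : Ω → β} {W : Ω → γ} (hX : Measurable X) (hW : Measurable W)
    (hXW : CondIndepFun m hm X W μ) :
    ∀ᵐ ω ∂μ, X ⟂ᵢ[condExpKernel μ m ω] W := by
  have h := (condIndepFun_iff_map_prod_eq_prod_map_map hX hW).mp hXW
  filter_upwards [ae_of_ae_trim hm h] with ω hω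
  rw [indepFun_iff_map_prod_eq_prod_map_map hX.aemeasurable hW.aemeasurable]
  simpa [Kernel.map_apply _ (hX.prodMk hW), Kernel.prod_apply, Kernel.map_apply _ hX,
    Kernel.map_apply _ hW] using hω

theorem CondIndepFun.condExp_mul_ae_eq (hf : Measurable f) (hg : Measurable g)
    (hfg : CondIndepFun m hm f g μ) (hf_int : Integrable f μ) (hg_int : Integrable g μ)
    (hfg_int : Integrable (f * g) μ) :
    μ[f * g | m] =ᵐ[μ] μ[f | m] * μ[g | m] := by
  filter_upwards [CondIndepFun.ae_indepFun_condExpKernel hf hg hfg,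
    condExp_ae_eq_integral_condExpKernel hm hfg_int, condExp_ae_eq_integral_condExpKernel hm hf_int,
    condExp_ae_eq_integral_condExpKernel hm hg_int] with ω hind hfg' hf' hg'
  rw [Pi.mul_apply, hfg', hf', hg']
  exact IndepFun.integral_mul_eq_mul_integral hind hf.aestronglyMeasurable hg.aestronglyMeasurable

theorem CondIndepFun.condExp_mul_ae_eq_of_le (h₂ : m₂ ≤ m)
    (hf : Measurable f) (hg : Measurable g)
    (hfg : CondIndepFun m hm f g μ) (hf_int : Integrable f μ) (hg_int : Integrable g μ)
    (hfg_int : Integrable (f * g) μ) (hf_m₂ : AEStronglyMeasurable[m₂] (μ[f | m]) μ) :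
    μ[f * g | m₂] =ᵐ[μ] μ[f | m₂] * μ[g | m₂] := by
  have hmul := CondIndepFun.condExp_mul_ae_eq hf hg hfg hf_int hg_int hfg_int
  calc μ[f * g | m₂]
      =ᵐ[μ] μ[μ[f | m] * μ[g | m] | m₂] :=
        (condExp_condExp_of_le h₂ hm).symm.trans (condExp_congr_ae hmul)
    _ =ᵐ[μ] μ[f | m] * μ[μ[g | m] | m₂] :=
        condExp_mul_of_aestronglyMeasurable_left hf_m₂ (integrable_condExp.congr hmul)
          integrable_condExp
    _ =ᵐ[μ] μ[f | m₂] * μ[g | m₂] :=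
        (condExp_ae_eq_of_le_of_aestronglyMeasurable h₂ hm hf_m₂).symm.mul
          (condExp_condExp_of_le h₂ hm)

theorem CondIndepFun.condExp_mul_div_condExp_ae_eq_of_le (h₂ : m₂ ≤ m)
    (hf : Measurable f) (hg : Measurable g)
    (hfg : CondIndepFun m hm f g μ) (hf_int : Integrable f μ) (hg_int : Integrable g μ)
    (hfg_int : Integrable (f * g) μ) (hf_m₂ : AEStronglyMeasurable[m₂] (μ[f | m]) μ)
    (hf_ne : ∀ᵐ ω ∂μ, μ[f | m] ω ≠ 0) :
    (fun ω => μ[f * g | m₂] ω / μ[f | m₂] ω) =ᵐ[μ] μ[g | m₂] := by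
  filter_upwards [CondIndepFun.condExp_mul_ae_eq_of_le h₂ hf hg hfg hf_int hg_int hfg_int hf_m₂,
    condExp_ae_eq_of_le_of_aestronglyMeasurable h₂ hm hf_m₂, hf_ne] with ω hmul hf' hne
  rw [hmul, Pi.mul_apply, hf', mul_div_cancel_left₀ _ hne]

end ProbabilityTheory

theorem ace_eq_subclassification_identity_general
    {Ω : Type*} [mΩ : MeasurableSpace Ω] [StandardBorelSpace Ω]
    (μ : Measure Ω) [IsProbabilityMeasure μ]
    (Z : Ω → ℝ) (hZ : Measurable Z) (hZ01 : ∀ ω, Z ω = 0 ∨ Z ω = 1)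
    (Y0 Y1 : Ω → ℝ) (hY0 : Measurable Y0) (hY1 : Measurable Y1)
    (hY0int : Integrable Y0 μ) (hY1int : Integrable Y1 μ)
    (Y : Ω → ℝ) (hY : Y = fun ω => Z ω * Y1 ω + (1 - Z ω) * Y0 ω)
    (mX : MeasurableSpace Ω)
    (hmXle : mX ≤ mΩ)
    (hindep : @CondIndepFun Ω mX mΩ _ hmXle ℝ (ℝ × ℝ) _ _ Z (fun ω => (Y0 ω, Y1 ω)) μ _)
    (e : Ω → ℝ) (he : e = μ[Z | mX])
    (hpos : ∀ᵐ ω ∂μ, 0 < e ω ∧ e ω < 1)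
    (me : MeasurableSpace Ω) (hme : me = MeasurableSpace.comap e inferInstance)
    (hmele : me ≤ mΩ) :
    (∫ ω, Y1 ω ∂μ) - ∫ ω, Y0 ω ∂μ
      = ∫ ω, (condExp me μ (fun ω' => Z ω' * Y ω') ω / condExp me μ Z ω
          - condExp me μ (fun ω' => (1 - Z ω') * Y ω') ω / condExp me μ (fun ω' => 1 - Z ω') ω) ∂μ := by
  have hZ_bdd : ∀ᵐ ω ∂μ, ‖Z ω‖ ≤ 1 := .of_forall fun ω => by
    rcases hZ01 ω with h | h <;> simp [h]
  have h1Z_bdd : ∀ᵐ ω ∂μ, ‖1 - Z ω‖ ≤ 1 := .of_forall fun ω => by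
    rcases hZ01 ω with h | h <;> simp [h]
  have hZ_int : Integrable Z μ := .of_bound hZ.aestronglyMeasurable 1 hZ_bdd
  have h1Z_int : Integrable (fun ω => 1 - Z ω) μ := (integrable_const 1).sub hZ_int
  have he_me : StronglyMeasurable[me] e :=
    hme ▸ (Measurable.of_comap_le le_rfl).stronglyMeasurable
  have hmeX : me ≤ mX := by
    rw [hme, he]
    exact stronglyMeasurable_condExp.measurable.comap_le
  have h1Z_mX : μ[fun ω => 1 - Z ω | mX] =ᵐ[μ] fun ω => 1 - e ω := by
    filter_upwards [condExp_sub (integrable_const (1 : ℝ)) hZ_int mX] with ω hω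
    rw [he]
    exact hω.trans (by simp [condExp_const hmXle])
  have htreat : (fun ω => μ[Z * Y1 | me] ω / μ[Z | me] ω) =ᵐ[μ] μ[Y1 | me] :=
    CondIndepFun.condExp_mul_div_condExp_ae_eq_of_le hmeX hZ hY1
      (hindep.comp measurable_id measurable_snd) hZ_int hY1int
      (hY1int.bdd_mul hZ.aestronglyMeasurable hZ_bdd) (he ▸ he_me.aestronglyMeasurable)
      (he ▸ hpos.mono fun _ hω => hω.1.ne')
  have hcontrol : (fun ω => μ[(fun ω => 1 - Z ω) * Y0 | me] ω / μ[fun ω => 1 - Z ω | me] ω)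
      =ᵐ[μ] μ[Y0 | me] :=
    CondIndepFun.condExp_mul_div_condExp_ae_eq_of_le hmeX (measurable_const.sub hZ) hY0
      (hindep.comp (measurable_const.sub measurable_id) measurable_fst) h1Z_int hY0int
      (hY0int.bdd_mul (measurable_const.sub hZ).aestronglyMeasurable h1Z_bdd)
      ((stronglyMeasurable_const.sub he_me).aestronglyMeasurable.congr h1Z_mX.symm)
      (by filter_upwards [h1Z_mX, hpos] with ω h h' using h ▸ (sub_pos.mpr h'.2).ne')
  have hZY : (fun ω => Z ω * Y ω) = Z * Y1 := by
    funext ω; rcases hZ01 ω with h | h <;> simp [hY, h]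
  have h1ZY : (fun ω => (1 - Z ω) * Y ω) = (fun ω => 1 - Z ω) * Y0 := by
    funext ω; rcases hZ01 ω with h | h <;> simp [hY, h]
  calc (∫ ω, Y1 ω ∂μ) - ∫ ω, Y0 ω ∂μ
      = ∫ ω, (μ[Y1 | me] ω - μ[Y0 | me] ω) ∂μ := by
        rw [integral_sub integrable_condExp integrable_condExp,
          integral_condExp hmele, integral_condExp hmele]
    _ = _ := by
        rw [hZY, h1ZY]
        exact integral_congr_ae (htreat.sub hcontrol).symm

/-- equation (1) of the paper: under strong ignorability and
positivity, the average causal effect equals the expectation, over the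
distribution of the propensity score `e(X)`, of the difference of conditional
mean outcomes among treated and controls at each propensity score value.  Here
`E[Y | e(X), Z=1] = E[ZY | e(X)] / E[Z | e(X)]` and
`E[Y | e(X), Z=0] = E[(1-Z)Y | e(X)] / E[1-Z | e(X)]` since `Z` is binary. -/
theorem ace_eq_subclassification_identity
    {Ω : Type*} [mΩ : MeasurableSpace Ω] [StandardBorelSpace Ω]
    (μ : Measure Ω) [IsProbabilityMeasure μ]
    {𝒳 : Type*} [MeasurableSpace 𝒳] (X : Ω → 𝒳) (hX : Measurable X)
    (Z : Ω → ℝ) (hZ : Measurable Z) (hZ01 : ∀ ω, Z ω = 0 ∨ Z ω = 1)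
    (Y0 Y1 : Ω → ℝ) (hY0 : Measurable Y0) (hY1 : Measurable Y1)
    (hY0int : Integrable Y0 μ) (hY1int : Integrable Y1 μ)
    (Y : Ω → ℝ) (hY : Y = fun ω => Z ω * Y1 ω + (1 - Z ω) * Y0 ω)
    (mX : MeasurableSpace Ω) (hmX : mX = MeasurableSpace.comap X inferInstance)
    (hmXle : mX ≤ mΩ)
    (hindep : @CondIndepFun Ω mX mΩ _ hmXle ℝ (ℝ × ℝ) _ _ Z (fun ω => (Y0 ω, Y1 ω)) μ _)
    (e : Ω → ℝ) (he : e = μ[Z | mX])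
    (hpos : ∀ᵐ ω ∂μ, 0 < e ω ∧ e ω < 1)
    (me : MeasurableSpace Ω) (hme : me = MeasurableSpace.comap e inferInstance)
    (hmele : me ≤ mΩ)
    (hint : Integrable (fun ω =>
      condExp me μ (fun ω' => Z ω' * Y ω') ω / condExp me μ Z ω
        - condExp me μ (fun ω' => (1 - Z ω') * Y ω') ω / condExp me μ (fun ω' => 1 - Z ω') ω) μ) :
    (∫ ω, Y1 ω ∂μ) - ∫ ω, Y0 ω ∂μ
      = ∫ ω, (condExp me μ (fun ω' => Z ω' * Y ω') ω / condExp me μ Z ω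
          - condExp me μ (fun ω' => (1 - Z ω') * Y ω') ω / condExp me μ (fun ω' => 1 - Z ω') ω) ∂μ :=
  ace_eq_subclassification_identity_general (mΩ := mΩ) μ Z hZ hZ01 Y0 Y1 hY0 hY1 hY0int hY1int Y hY
    mX hmXle hindep e he hpos me hme hmele
end
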